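/- arXiv:1705.09377 — 8 statements merged into one kernel-verified Lean document; each statement's English description precedes it below -/
import Mathlib

section
/- If (x₁,x₂,x₃,x₄) is a quadruple of positive reals satisfying x₁²+x₂²+x₃²+x₄² = x₁x₂x₃x₄ with x₁ ≤ x₂ ≤ x₃ ≤ x₄, then x₁x₂ > 2. -/
theorem stmt_1 (x1 x2 x3 x4 : ℝ) (h1 : 0 < x1) (h2 : 0 < x2) (h3 : 0 < x3) (h4 : 0 < x4)
    (heq : x1 ^ 2 + x2 ^ 2 + x3 ^ 2 + x4 ^ 2 = x1 * x2 * x3 * x4)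
    (h12 : x1 ≤ x2) (h23 : x2 ≤ x3) (h34 : x3 ≤ x4) :
    2 < x1 * x2 := by
  have hx34 : 0 < x3 * x4 := mul_pos h3 h4
  nlinarith [sq_nonneg (x3 - x4), mul_pos h1 h2, sq_nonneg x1, sq_nonneg x2,
    mul_pos (mul_pos h1 h2) hx34]
end

section
/- If (x₁,x₂,x₃,x₄) is a positive real solution of x₁²+x₂²+x₃²+x₄² = x₁x₂x₃x₄ with x₁ ≤ x₂ ≤ x₃ ≤ x₄, and if additionally x₁x₂ ≥ 2+ε for some ε > 0, then for each j ∈ {1,2,3}, the new coordinate of the Markoff move at index j satisfies (mⱼ(x))ⱼ = x₁x₂x₃x₄/xⱼ − xⱼ ≥ (1+ε)x₄; in particular it strictly exceeds x₄. -/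
theorem stmt_4 (x1 x2 x3 x4 ε : ℝ) (h1 : 0 < x1) (h2 : 0 < x2) (h3 : 0 < x3) (h4 : 0 < x4)
    (heq : x1 ^ 2 + x2 ^ 2 + x3 ^ 2 + x4 ^ 2 = x1 * x2 * x3 * x4)
    (h12 : x1 ≤ x2) (h23 : x2 ≤ x3) (h34 : x3 ≤ x4)
    (hε : 0 < ε) (hprod : 2 + ε ≤ x1 * x2) :
    ((1 + ε) * x4 ≤ x1 * x2 * x3 * x4 / x1 - x1 ∧ x4 < x1 * x2 * x3 * x4 / x1 - x1) ∧
    ((1 + ε) * x4 ≤ x1 * x2 * x3 * x4 / x2 - x2 ∧ x4 < x1 * x2 * x3 * x4 / x2 - x2) ∧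
    ((1 + ε) * x4 ≤ x1 * x2 * x3 * x4 / x3 - x3 ∧ x4 < x1 * x2 * x3 * x4 / x3 - x3) := by
  have e1 : x1 * x2 * x3 * x4 / x1 = x2 * x3 * x4 := by field_simp
  have e2 : x1 * x2 * x3 * x4 / x2 = x1 * x3 * x4 := by field_simp
  have e3 : x1 * x2 * x3 * x4 / x3 = x1 * x2 * x4 := by field_simp
  rw [e1, e2, e3]
  have h14 : x1 ≤ x4 := h12.trans (h23.trans h34)
  have h24 : x2 ≤ x4 := h23.trans h34
  have p1 : 2 + ε ≤ x2 * x3 := hprod.trans (by nlinarith)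
  have p2 : 2 + ε ≤ x1 * x3 := hprod.trans (by nlinarith)
  have q1 : (2 + ε) * x4 ≤ x2 * x3 * x4 := mul_le_mul_of_nonneg_right p1 h4.le
  have q2 : (2 + ε) * x4 ≤ x1 * x3 * x4 := mul_le_mul_of_nonneg_right p2 h4.le
  have q3 : (2 + ε) * x4 ≤ x1 * x2 * x4 := mul_le_mul_of_nonneg_right hprod h4.le
  have k1 : (1 + ε) * x4 ≤ x2 * x3 * x4 - x1 := by nlinarith
  have k2 : (1 + ε) * x4 ≤ x1 * x3 * x4 - x2 := by nlinarith
  have k3 : (1 + ε) * x4 ≤ x1 * x2 * x4 - x3 := by nlinarith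
  have lt : x4 < (1 + ε) * x4 := by nlinarith
  exact ⟨⟨k1, lt.trans_le k1⟩, ⟨k2, lt.trans_le k2⟩, ⟨k3, lt.trans_le k3⟩⟩
end

section
/- Let (x₁,x₂,x₃,x₄) be a positive real solution of x₁²+x₂²+x₃²+x₄² = x₁x₂x₃x₄ with x₁ ≤ x₂ ≤ x₃ < x₄. If the flipped value x₄' = x₁x₂x₃ − x₄ satisfies x₄' ≥ x₄, then x₁x₂ < 4. -/
theorem stmt_5 (x1 x2 x3 x4 : ℝ) (h1 : 0 < x1) (h2 : 0 < x2) (h3 : 0 < x3) (h4 : 0 < x4)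
    (heq : x1 ^ 2 + x2 ^ 2 + x3 ^ 2 + x4 ^ 2 = x1 * x2 * x3 * x4)
    (h12 : x1 ≤ x2) (h23 : x2 ≤ x3) (h34 : x3 < x4)
    (hflip : x4 ≤ x1 * x2 * x3 - x4) :
    x1 * x2 < 4 := by
  by_contra h
  push_neg at h
  have hkey : (x4 - x3) * ((x1 * x2 * x3 - x4) - x3) > 0 :=
    mul_pos (by linarith) (by linarith)
  nlinarith [sq_nonneg (x1 - x3), sq_nonneg (x2 - x3), sq_nonneg x3, mul_pos h1 h2,
    sq_nonneg (x1 - x2), mul_le_mul h12 h23 h2.le h2.le]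
end

section
/- Let (x₁,x₂,x₃,x₄) be a positive real solution of x₁²+x₂²+x₃²+x₄² = x₁x₂x₃x₄ with x₁ ≤ x₂ ≤ x₃ ≤ x₄, and suppose x₄ = x₃ + δ with 0 ≤ δ < 1 and x₃ ≥ 9. Then x₁x₂ < 5. -/
theorem stmt_7 (x1 x2 x3 x4 δ : ℝ) (h1 : 0 < x1) (h2 : 0 < x2) (h3 : 0 < x3) (h4 : 0 < x4)
    (heq : x1 ^ 2 + x2 ^ 2 + x3 ^ 2 + x4 ^ 2 = x1 * x2 * x3 * x4)
    (h12 : x1 ≤ x2) (h23 : x2 ≤ x3) (h34 : x3 ≤ x4)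
    (hδ : x4 = x3 + δ) (hδ0 : 0 ≤ δ) (hδ1 : δ < 1) (hx3 : 9 ≤ x3) :
    x1 * x2 < 5 := by
  have hx4 : 9 ≤ x4 := le_trans hx3 h34
  have h1' : x1 ≤ x3 := le_trans h12 h23
  have key : x1 ^ 2 + x2 ^ 2 ≤ 2 * x3 ^ 2 := by nlinarith
  have hd : x3 ^ 2 + x4 ^ 2 = 2 * (x3 * x4) + δ ^ 2 := by subst hδ; ring
  have h81 : 81 ≤ x3 * x4 := by nlinarith
  have : x1 * x2 * (x3 * x4) < 5 * (x3 * x4) := by nlinarith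
  have hpos : 0 < x3 * x4 := by positivity
  exact lt_of_mul_lt_mul_right (by linarith [this]) hpos.le
end

section
/- Let (x₁,x₂,x₃,x₄) be a positive real solution of x₁²+x₂²+x₃²+x₄² = x₁x₂x₃x₄ with x₁ ≤ x₂ ≤ x₃ ≤ x₄, write x₄ = x₃ + δ, and suppose ε > 0 satisfies (1+δ/x₃)x₁x₂ − 1 − (1+δ/x₃)² > ε/2. Then x₃² ≤ (2/ε)(x₁² + x₂²). -/
/-- The ratio `x4 / x3` is the paper's `1 + δ / x₃`. -/
theorem markoffHurwitz_sq_mul_eq {x1 x2 x3 x4 : ℝ} (hx3 : x3 ≠ 0)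
    (heq : x1 ^ 2 + x2 ^ 2 + x3 ^ 2 + x4 ^ 2 = x1 * x2 * x3 * x4) :
    x3 ^ 2 * (x4 / x3 * (x1 * x2) - 1 - (x4 / x3) ^ 2) = x1 ^ 2 + x2 ^ 2 := by
  field_simp
  linear_combination -heq

theorem le_two_div_mul_of_mul_eq {a q s ε : ℝ} (ha : 0 ≤ a) (hε : 0 < ε) (hq : ε / 2 < q)
    (h : a * q = s) : a ≤ 2 / ε * s := by
  have : a * (ε / 2) ≤ s := h ▸ mul_le_mul_of_nonneg_left hq.le ha
  rw [div_mul_eq_mul_div, le_div_iff₀ hε]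
  linarith

theorem stmt_8_general (x1 x2 x3 x4 δ ε : ℝ) (h3 : 0 < x3)
    (heq : x1 ^ 2 + x2 ^ 2 + x3 ^ 2 + x4 ^ 2 = x1 * x2 * x3 * x4)
    (hδ : x4 = x3 + δ) (hε : 0 < ε)
    (hkey : ε / 2 < (1 + δ / x3) * (x1 * x2) - 1 - (1 + δ / x3) ^ 2) :
    x3 ^ 2 ≤ (2 / ε) * (x1 ^ 2 + x2 ^ 2) := by
  have hratio : 1 + δ / x3 = x4 / x3 := by
    rw [hδ, add_div, div_self h3.ne']
  rw [hratio] at hkey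
  exact le_two_div_mul_of_mul_eq (sq_nonneg x3) hε hkey (markoffHurwitz_sq_mul_eq h3.ne' heq)

theorem stmt_8 (x1 x2 x3 x4 δ ε : ℝ) (h1 : 0 < x1) (h2 : 0 < x2) (h3 : 0 < x3) (h4 : 0 < x4)
    (heq : x1 ^ 2 + x2 ^ 2 + x3 ^ 2 + x4 ^ 2 = x1 * x2 * x3 * x4)
    (h12 : x1 ≤ x2) (h23 : x2 ≤ x3) (h34 : x3 ≤ x4)
    (hδ : x4 = x3 + δ) (hε : 0 < ε)
    (hkey : ε / 2 < (1 + δ / x3) * (x1 * x2) - 1 - (1 + δ / x3) ^ 2) :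
    x3 ^ 2 ≤ (2 / ε) * (x1 ^ 2 + x2 ^ 2) :=
  stmt_8_general x1 x2 x3 x4 δ ε h3 heq hδ hε hkey
end

section
/- Every positive integer solution of x₁²+x₂²+x₃²+x₄² = x₁x₂x₃x₄ other than (2,2,2,2) has a unique largest coordinate (the maximal value is attained at exactly one index). -/
lemma key4 (p q c d : ℤ) (hp : 0 < p) (hc : 0 < c) (hd : 0 < d)
    (hpq : p = q) (hcp : c ≤ p) (hdp : d ≤ p)
    (heq : p^2+q^2+c^2+d^2 = p*q*c*d) : p = 2 ∧ q = 2 ∧ c = 2 ∧ d = 2 := by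
  subst hpq
  have h1 : p^2*(c*d-2) = c^2+d^2 := by ring_nf; linarith [heq]
  have h2 : c*d ≤ 4 := by nlinarith
  have h3 : 3 ≤ c*d := by nlinarith
  have hc4 : c ≤ 4 := by nlinarith
  have hd4 : d ≤ 4 := by nlinarith
  have hc1 : 1 ≤ c := hc
  have hd1 : 1 ≤ d := hd
  interval_cases c <;> interval_cases d <;>
    first
    | omega
    | (have h5 : p ≤ 5 := by nlinarith
       have h6 : 1 ≤ p := hp
       interval_cases p <;> omega)

lemma two_max (x : Fin 4 → ℤ) (hpos : ∀ i, 0 < x i)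
    (heq : ∑ i, (x i) ^ 2 = ∏ i, x i) (a b : Fin 4) (hab : a ≠ b)
    (hmax : ∀ i, x i ≤ x b) (hxy : x a = x b) : ∀ i, x i = 2 := by
  simp only [Fin.sum_univ_four, Fin.prod_univ_four] at heq
  fin_cases a <;> fin_cases b
  · exact absurd rfl hab
  · have hxy' : x 0 = x 1 := hxy
    obtain ⟨e1,e2,e3,e4⟩ := key4 (x 0) (x 1) (x 2) (x 3) (hpos 0) (hpos 2) (hpos 3) hxy' ((hmax 2).trans hxy'.symm.le) ((hmax 3).trans hxy'.symm.le) (by linear_combination heq)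
    intro i; fin_cases i <;> [exact e1; exact e2; exact e3; exact e4]
  · have hxy' : x 0 = x 2 := hxy
    obtain ⟨e1,e2,e3,e4⟩ := key4 (x 0) (x 2) (x 1) (x 3) (hpos 0) (hpos 1) (hpos 3) hxy' ((hmax 1).trans hxy'.symm.le) ((hmax 3).trans hxy'.symm.le) (by linear_combination heq)
    intro i; fin_cases i <;> [exact e1; exact e3; exact e2; exact e4]
  · have hxy' : x 0 = x 3 := hxy
    obtain ⟨e1,e2,e3,e4⟩ := key4 (x 0) (x 3) (x 1) (x 2) (hpos 0) (hpos 1) (hpos 2) hxy' ((hmax 1).trans hxy'.symm.le) ((hmax 2).trans hxy'.symm.le) (by linear_combination heq)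
    intro i; fin_cases i <;> [exact e1; exact e3; exact e4; exact e2]
  · have hxy' : x 1 = x 0 := hxy
    obtain ⟨e1,e2,e3,e4⟩ := key4 (x 1) (x 0) (x 2) (x 3) (hpos 1) (hpos 2) (hpos 3) hxy' ((hmax 2).trans hxy'.symm.le) ((hmax 3).trans hxy'.symm.le) (by linear_combination heq)
    intro i; fin_cases i <;> [exact e2; exact e1; exact e3; exact e4]
  · exact absurd rfl hab
  · have hxy' : x 1 = x 2 := hxy
    obtain ⟨e1,e2,e3,e4⟩ := key4 (x 1) (x 2) (x 0) (x 3) (hpos 1) (hpos 0) (hpos 3) hxy' ((hmax 0).trans hxy'.symm.le) ((hmax 3).trans hxy'.symm.le) (by linear_combination heq)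
    intro i; fin_cases i <;> [exact e3; exact e1; exact e2; exact e4]
  · have hxy' : x 1 = x 3 := hxy
    obtain ⟨e1,e2,e3,e4⟩ := key4 (x 1) (x 3) (x 0) (x 2) (hpos 1) (hpos 0) (hpos 2) hxy' ((hmax 0).trans hxy'.symm.le) ((hmax 2).trans hxy'.symm.le) (by linear_combination heq)
    intro i; fin_cases i <;> [exact e3; exact e1; exact e4; exact e2]
  · have hxy' : x 2 = x 0 := hxy
    obtain ⟨e1,e2,e3,e4⟩ := key4 (x 2) (x 0) (x 1) (x 3) (hpos 2) (hpos 1) (hpos 3) hxy' ((hmax 1).trans hxy'.symm.le) ((hmax 3).trans hxy'.symm.le) (by linear_combination heq)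
    intro i; fin_cases i <;> [exact e2; exact e3; exact e1; exact e4]
  · have hxy' : x 2 = x 1 := hxy
    obtain ⟨e1,e2,e3,e4⟩ := key4 (x 2) (x 1) (x 0) (x 3) (hpos 2) (hpos 0) (hpos 3) hxy' ((hmax 0).trans hxy'.symm.le) ((hmax 3).trans hxy'.symm.le) (by linear_combination heq)
    intro i; fin_cases i <;> [exact e3; exact e2; exact e1; exact e4]
  · exact absurd rfl hab
  · have hxy' : x 2 = x 3 := hxy
    obtain ⟨e1,e2,e3,e4⟩ := key4 (x 2) (x 3) (x 0) (x 1) (hpos 2) (hpos 0) (hpos 1) hxy' ((hmax 0).trans hxy'.symm.le) ((hmax 1).trans hxy'.symm.le) (by linear_combination heq)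
    intro i; fin_cases i <;> [exact e3; exact e4; exact e1; exact e2]
  · have hxy' : x 3 = x 0 := hxy
    obtain ⟨e1,e2,e3,e4⟩ := key4 (x 3) (x 0) (x 1) (x 2) (hpos 3) (hpos 1) (hpos 2) hxy' ((hmax 1).trans hxy'.symm.le) ((hmax 2).trans hxy'.symm.le) (by linear_combination heq)
    intro i; fin_cases i <;> [exact e2; exact e3; exact e4; exact e1]
  · have hxy' : x 3 = x 1 := hxy
    obtain ⟨e1,e2,e3,e4⟩ := key4 (x 3) (x 1) (x 0) (x 2) (hpos 3) (hpos 0) (hpos 2) hxy' ((hmax 0).trans hxy'.symm.le) ((hmax 2).trans hxy'.symm.le) (by linear_combination heq)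
    intro i; fin_cases i <;> [exact e3; exact e2; exact e4; exact e1]
  · have hxy' : x 3 = x 2 := hxy
    obtain ⟨e1,e2,e3,e4⟩ := key4 (x 3) (x 2) (x 0) (x 1) (hpos 3) (hpos 0) (hpos 1) hxy' ((hmax 0).trans hxy'.symm.le) ((hmax 1).trans hxy'.symm.le) (by linear_combination heq)
    intro i; fin_cases i <;> [exact e3; exact e4; exact e2; exact e1]
  · exact absurd rfl hab

theorem stmt_10 (x : Fin 4 → ℤ) (hpos : ∀ i, 0 < x i)
    (heq : ∑ i, (x i) ^ 2 = ∏ i, x i)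
    (hne : x ≠ fun _ => 2) :
    ∃! j : Fin 4, ∀ i, i ≠ j → x i < x j := by
  obtain ⟨j, hj⟩ := Finite.exists_max x
  have hstrict : ∀ i, i ≠ j → x i < x j := by
    intro i hi
    rcases lt_or_eq_of_le (hj i) with h | h
    · exact h
    · exact absurd (funext (two_max x hpos heq i j hi hj h)) hne
  refine ⟨j, hstrict, fun y hy => ?_⟩
  by_contra hne'
  exact absurd (hy j fun h => hne' h.symm) (not_lt.2 (hstrict y hne').le)
end

section
/- Let (x₁,x₂,x₃,x₄) be a positive integer solution of x₁²+x₂²+x₃²+x₄² = x₁x₂x₃x₄ other than (2,2,2,2), and let xⱼ be its largest coordinate. Then every coordinate of mⱼ(x) is strictly smaller than xⱼ. -/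
/-- The Markoff move at index `j`. -/
def markoffMove (j : Fin 4) (x : Fin 4 → ℤ) : Fin 4 → ℤ :=
  Function.update x j ((∏ i ∈ Finset.univ.erase j, x i) - x j)


set_option maxRecDepth 10000 in
lemma mod4 : ∀ r : Fin 4 → ZMod 4, (∑ i, (r i)^2 = ∏ i, r i) → ∀ i, r i = 0 ∨ r i = 2 := by
  decide


/-- Descent, assuming `b` is the largest of `b,c,d`. -/
lemma key' (a b c d : ℤ) (ha : 2 ≤ a) (hb : 2 ≤ b) (hc : 2 ≤ c) (hd : 2 ≤ d)
    (heq : a^2 + b^2 + c^2 + d^2 = a*b*c*d)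
    (hba : b ≤ a) (hca : c ≤ a) (hda : d ≤ a)
    (hcb : c ≤ b) (hdb : d ≤ b)
    (hne : ¬(a = 2 ∧ b = 2 ∧ c = 2 ∧ d = 2)) :
    b < a ∧ c < a ∧ d < a ∧ b*c*d - a < a := by
  have hblt : b < a := by
    rcases lt_or_eq_of_le hba with h | h
    · exact h
    · exfalso
      subst h
      -- heq : b^2+b^2+c^2+d^2 = b*b*c*d
      have h1 : b^2*(c*d) ≤ 4*b^2 := by
        nlinarith [mul_nonneg (sub_nonneg.2 hcb) (by linarith : (0:ℤ) ≤ b + c),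
          mul_nonneg (sub_nonneg.2 hdb) (by linarith : (0:ℤ) ≤ b + d)]
      have hcd : c*d ≤ 4 := by nlinarith
      have hc2 : c = 2 := by nlinarith
      have hd2 : d = 2 := by nlinarith
      subst hc2; subst hd2
      have hb2 : b = 2 := by nlinarith
      exact hne ⟨hb2, hb2, rfl, rfl⟩
  have hclt : c < a := lt_of_le_of_lt hcb hblt
  have hdlt : d < a := lt_of_le_of_lt hdb hblt
  have hcd4 : 4 ≤ c*d := by nlinarith
  have e : (b - a) * (b - (b*c*d - a)) = 2*b^2 + c^2 + d^2 - b^2*(c*d) := by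
    linear_combination -heq
  have hfb : 2*b^2 + c^2 + d^2 - b^2*(c*d) ≤ 0 := by
    nlinarith [mul_nonneg (sub_nonneg.2 hcb) (by linarith : (0:ℤ) ≤ b + c),
      mul_nonneg (sub_nonneg.2 hdb) (by linarith : (0:ℤ) ≤ b + d)]
  have h6 : (b - a) * (b - (b*c*d - a)) ≤ 0 := e ▸ hfb
  have h7 : b*c*d - a ≤ b := by
    by_contra h
    push_neg at h
    nlinarith [mul_pos (by linarith : (0:ℤ) < a - b) (by linarith : (0:ℤ) < (b*c*d - a) - b)]
  exact ⟨hblt, hclt, hdlt, by linarith⟩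

/-- Descent, symmetric in `b,c,d`. -/
lemma key (a b c d : ℤ) (ha : 2 ≤ a) (hb : 2 ≤ b) (hc : 2 ≤ c) (hd : 2 ≤ d)
    (heq : a^2 + b^2 + c^2 + d^2 = a*b*c*d)
    (hba : b ≤ a) (hca : c ≤ a) (hda : d ≤ a)
    (hne : ¬(a = 2 ∧ b = 2 ∧ c = 2 ∧ d = 2)) :
    b < a ∧ c < a ∧ d < a ∧ b*c*d - a < a := by
  rcases le_total c b with h1 | h1 <;> rcases le_total d b with h2 | h2 <;>
    rcases le_total d c with h3 | h3
  · obtain ⟨p,q,r,s⟩ := key' a b c d ha hb hc hd (by linarith) hba hca hda h1 h2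
      (by tauto)
    exact ⟨p, q, r, by linarith⟩
  · obtain ⟨p,q,r,s⟩ := key' a b c d ha hb hc hd (by linarith) hba hca hda h1 h2
      (by tauto)
    exact ⟨p, q, r, by linarith⟩
  · obtain ⟨p,q,r,s⟩ := key' a d b c ha hd hb hc (by linear_combination heq) hda hba hca
      (by linarith) (by linarith) (by tauto)
    refine ⟨q, r, p, by linarith [s]⟩
  · obtain ⟨p,q,r,s⟩ := key' a d b c ha hd hb hc (by linear_combination heq) hda hba hca
      (by linarith) (by linarith) (by tauto)
    refine ⟨q, r, p, by linarith [s]⟩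
  · obtain ⟨p,q,r,s⟩ := key' a c b d ha hc hb hd (by linear_combination heq) hca hba hda
      h1 h3 (by tauto)
    exact ⟨q, p, r, by linarith [s]⟩
  · obtain ⟨p,q,r,s⟩ := key' a c b d ha hc hb hd (by linear_combination heq) hca hba hda
      h1 (by linarith) (by tauto)
    exact ⟨q, p, r, by linarith [s]⟩
  · obtain ⟨p,q,r,s⟩ := key' a c b d ha hc hb hd (by linear_combination heq) hca hba hda
      h1 h3 (by tauto)
    exact ⟨q, p, r, by linarith [s]⟩
  · obtain ⟨p,q,r,s⟩ := key' a d b c ha hd hb hc (by linear_combination heq) hda hba hca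
      h2 h3 (by tauto)
    exact ⟨q, r, p, by linarith [s]⟩

theorem stmt_11 (x : Fin 4 → ℤ) (hpos : ∀ i, 0 < x i)
    (heq : ∑ i, (x i) ^ 2 = ∏ i, x i)
    (hne : x ≠ fun _ => 2)
    (j : Fin 4) (hj : ∀ i, x i ≤ x j) :
    ∀ i, markoffMove j x i < x j := by
  -- all coordinates are even
  have h4 : ∑ i, ((x i : ZMod 4))^2 = ∏ i, ((x i : ZMod 4)) := by
    have := congrArg (Int.cast : ℤ → ZMod 4) heq
    push_cast at this
    exact this
  have heven : ∀ i, 2 ≤ x i := by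
    intro i
    have hp := hpos i
    rcases mod4 _ h4 i with h | h
    · have : (4:ℤ) ∣ x i := by
        exact_mod_cast (ZMod.intCast_zmod_eq_zero_iff_dvd (x i) 4).mp h
      omega
    · have : (4:ℤ) ∣ (x i - 2) := by
        apply (ZMod.intCast_zmod_eq_zero_iff_dvd _ 4).mp
        push_cast
        rw [h]; ring
      omega
  rw [Fin.sum_univ_four, Fin.prod_univ_four] at heq
  have hne' : ¬(x 0 = 2 ∧ x 1 = 2 ∧ x 2 = 2 ∧ x 3 = 2) := by
    rintro ⟨h0, h1, h2, h3⟩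
    apply hne
    funext i
    fin_cases i <;> assumption
  fin_cases j
  · obtain ⟨p1, p2, p3, p4⟩ := key (x 0) (x 1) (x 2) (x 3) (heven 0) (heven 1) (heven 2)
      (heven 3) (by linarith) (hj 1) (hj 2) (hj 3) hne'
    have he : Finset.univ.erase (0 : Fin 4) = {1, 2, 3} := by decide
    intro i
    fin_cases i <;>
      simp [markoffMove, he, Function.update, Finset.prod_insert, Fin.isValue] <;>
      linarith
  · obtain ⟨p1, p2, p3, p4⟩ := key (x 1) (x 0) (x 2) (x 3) (heven 1) (heven 0) (heven 2)
      (heven 3) (by linear_combination heq) (hj 0) (hj 2) (hj 3)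
      (by tauto)
    have he : Finset.univ.erase (1 : Fin 4) = {0, 2, 3} := by decide
    intro i
    fin_cases i <;>
      simp [markoffMove, he, Function.update, Finset.prod_insert, Fin.isValue] <;>
      linarith
  · obtain ⟨p1, p2, p3, p4⟩ := key (x 2) (x 0) (x 1) (x 3) (heven 2) (heven 0) (heven 1)
      (heven 3) (by linear_combination heq) (hj 0) (hj 1) (hj 3)
      (by tauto)
    have he : Finset.univ.erase (2 : Fin 4) = {0, 1, 3} := by decide
    intro i
    fin_cases i <;>
      simp [markoffMove, he, Function.update, Finset.prod_insert, Fin.isValue] <;>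
      linarith
  · obtain ⟨p1, p2, p3, p4⟩ := key (x 3) (x 0) (x 1) (x 2) (heven 3) (heven 0) (heven 1)
      (heven 2) (by linear_combination heq) (hj 0) (hj 1) (hj 2)
      (by tauto)
    have he : Finset.univ.erase (3 : Fin 4) = {0, 1, 2} := by decide
    intro i
    fin_cases i <;>
      simp [markoffMove, he, Function.update, Finset.prod_insert, Fin.isValue] <;>
      linarith
end

section
/- Every positive integer solution of x₁²+x₂²+x₃²+x₄² = x₁x₂x₃x₄ can be obtained from (2,2,2,2) by a finite sequence of Markoff moves. -/
lemma zmod4 : ∀ p q r s : ZMod 4, p^2+q^2+r^2+s^2 = p*q*r*s →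
    (p = 0 ∨ p = 2) ∧ (q = 0 ∨ q = 2) ∧ (r = 0 ∨ r = 2) ∧ (s = 0 ∨ s = 2) := by decide

lemma even_of (a : ℤ) (h : (a : ZMod 4) = 0 ∨ (a : ZMod 4) = 2) : 2 ∣ a := by
  rcases h with h | h
  · have := (ZMod.intCast_zmod_eq_zero_iff_dvd a 4).mp h
    omega
  · have : ((a - 2 : ℤ) : ZMod 4) = 0 := by push_cast; rw [h]; ring
    have := (ZMod.intCast_zmod_eq_zero_iff_dvd (a-2) 4).mp this
    omega

lemma even4 (a b c d : ℤ) (h : a^2+b^2+c^2+d^2 = a*b*c*d) :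
    2 ∣ a ∧ 2 ∣ b ∧ 2 ∣ c ∧ 2 ∣ d := by
  have h4 : (a : ZMod 4)^2+(b:ZMod 4)^2+(c:ZMod 4)^2+(d:ZMod 4)^2
      = (a:ZMod 4)*(b:ZMod 4)*(c:ZMod 4)*(d:ZMod 4) := by
    have := congrArg (fun z : ℤ => (z : ZMod 4)) h
    push_cast at this
    exact this
  obtain ⟨ha, hb, hc, hd⟩ := zmod4 _ _ _ _ h4
  exact ⟨even_of a ha, even_of b hb, even_of c hc, even_of d hd⟩

-- core: a is max, b is max of rest
lemma core (a b c d : ℤ) (pa : 0 < a) (pb : 0 < b) (pc : 0 < c) (pd : 0 < d)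
    (ea : 2 ∣ a) (eb : 2 ∣ b) (ec : 2 ∣ c) (ed : 2 ∣ d)
    (hab : b ≤ a) (hac : c ≤ a) (had : d ≤ a) (hbc : c ≤ b) (hbd : d ≤ b)
    (heq : a^2+b^2+c^2+d^2 = a*b*c*d) :
    (a = 2 ∧ b = 2 ∧ c = 2 ∧ d = 2) ∨ a*b*c*d < 2*a^2 := by
  by_cases hlt : a*b*c*d < 2*a^2
  · exact Or.inr hlt
  left
  push_neg at hlt
  have hbcd : 2*a ≤ b*c*d := by
    have h' : a*(2*a) ≤ a*(b*c*d) := by nlinarith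
    exact le_of_mul_le_mul_left h' pa
  have key1 : a * (b*c*d - a) = b^2 + c^2 + d^2 := by linear_combination -heq
  have hb2 : b ≤ b*c*d - a := by linarith
  have hfb : 0 ≤ (a - b) * ((b*c*d - a) - b) := mul_nonneg (by linarith) (by linarith)
  have h2 : b^2*(c*d) ≤ 2*b^2 + c^2 + d^2 := by nlinarith [key1, hfb]
  have hc2 : 2 ≤ c := by omega
  have hd2 : 2 ≤ d := by omega
  have hb2' : 2 ≤ b := by omega
  have hcd : c*d ≤ 4 := by nlinarith
  have hcv : c = 2 := by nlinarith
  have hdv : d = 2 := by nlinarith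
  subst hcv hdv
  have hbv : b = 2 := by nlinarith
  subst hbv
  have ha4 : a ≤ 4 := by linarith
  have : (a - 2) * (a - 6) = 0 := by linear_combination heq
  have hav : a = 2 := by
    rcases mul_eq_zero.mp this with h | h
    · omega
    · omega
  exact ⟨hav, rfl, rfl, rfl⟩

lemma L' (a b c d : ℤ) (pa : 0 < a) (pb : 0 < b) (pc : 0 < c) (pd : 0 < d)
    (heq : a^2+b^2+c^2+d^2 = a*b*c*d) :
    (a = 2 ∧ b = 2 ∧ c = 2 ∧ d = 2) ∨ a*b*c*d < 2*a^2 ∨ a*b*c*d < 2*b^2 ∨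
      a*b*c*d < 2*c^2 ∨ a*b*c*d < 2*d^2 := by
  obtain ⟨ea, eb, ec, ed⟩ := even4 a b c d heq
  have C4 : (b ≤ a ∧ c ≤ a ∧ d ≤ a) ∨ (a ≤ b ∧ c ≤ b ∧ d ≤ b) ∨ (a ≤ c ∧ b ≤ c ∧ d ≤ c) ∨ (a ≤ d ∧ b ≤ d ∧ c ≤ d) := by omega
  rcases C4 with ⟨h1, h2, h3⟩ | ⟨h1, h2, h3⟩ | ⟨h1, h2, h3⟩ | ⟨h1, h2, h3⟩
  · have C3 : (c ≤ b ∧ d ≤ b) ∨ (b ≤ c ∧ d ≤ c) ∨ (b ≤ d ∧ c ≤ d) := by omega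
    rcases C3 with ⟨g1, g2⟩ | ⟨g1, g2⟩ | ⟨g1, g2⟩
    · rcases core a b c d pa pb pc pd ea eb ec ed (by omega) (by omega) (by omega) (by omega) (by omega) (by linear_combination heq) with h | h
      · exact Or.inl ⟨h.1, h.2.1, h.2.2.1, h.2.2.2⟩
      · rw [show a*b*c*d = a*b*c*d by ring] at h
        exact Or.inr (Or.inl h)
    · rcases core a c b d pa pc pb pd ea ec eb ed (by omega) (by omega) (by omega) (by omega) (by omega) (by linear_combination heq) with h | h
      · exact Or.inl ⟨h.1, h.2.2.1, h.2.1, h.2.2.2⟩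
      · rw [show a*c*b*d = a*b*c*d by ring] at h
        exact Or.inr (Or.inl h)
    · rcases core a d b c pa pd pb pc ea ed eb ec (by omega) (by omega) (by omega) (by omega) (by omega) (by linear_combination heq) with h | h
      · exact Or.inl ⟨h.1, h.2.2.1, h.2.2.2, h.2.1⟩
      · rw [show a*d*b*c = a*b*c*d by ring] at h
        exact Or.inr (Or.inl h)
  · have C3 : (c ≤ a ∧ d ≤ a) ∨ (a ≤ c ∧ d ≤ c) ∨ (a ≤ d ∧ c ≤ d) := by omega
    rcases C3 with ⟨g1, g2⟩ | ⟨g1, g2⟩ | ⟨g1, g2⟩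
    · rcases core b a c d pb pa pc pd eb ea ec ed (by omega) (by omega) (by omega) (by omega) (by omega) (by linear_combination heq) with h | h
      · exact Or.inl ⟨h.2.1, h.1, h.2.2.1, h.2.2.2⟩
      · rw [show b*a*c*d = a*b*c*d by ring] at h
        exact Or.inr (Or.inr (Or.inl h))
    · rcases core b c a d pb pc pa pd eb ec ea ed (by omega) (by omega) (by omega) (by omega) (by omega) (by linear_combination heq) with h | h
      · exact Or.inl ⟨h.2.2.1, h.1, h.2.1, h.2.2.2⟩
      · rw [show b*c*a*d = a*b*c*d by ring] at h
        exact Or.inr (Or.inr (Or.inl h))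
    · rcases core b d a c pb pd pa pc eb ed ea ec (by omega) (by omega) (by omega) (by omega) (by omega) (by linear_combination heq) with h | h
      · exact Or.inl ⟨h.2.2.1, h.1, h.2.2.2, h.2.1⟩
      · rw [show b*d*a*c = a*b*c*d by ring] at h
        exact Or.inr (Or.inr (Or.inl h))
  · have C3 : (b ≤ a ∧ d ≤ a) ∨ (a ≤ b ∧ d ≤ b) ∨ (a ≤ d ∧ b ≤ d) := by omega
    rcases C3 with ⟨g1, g2⟩ | ⟨g1, g2⟩ | ⟨g1, g2⟩
    · rcases core c a b d pc pa pb pd ec ea eb ed (by omega) (by omega) (by omega) (by omega) (by omega) (by linear_combination heq) with h | h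
      · exact Or.inl ⟨h.2.1, h.2.2.1, h.1, h.2.2.2⟩
      · rw [show c*a*b*d = a*b*c*d by ring] at h
        exact Or.inr (Or.inr (Or.inr (Or.inl h)))
    · rcases core c b a d pc pb pa pd ec eb ea ed (by omega) (by omega) (by omega) (by omega) (by omega) (by linear_combination heq) with h | h
      · exact Or.inl ⟨h.2.2.1, h.2.1, h.1, h.2.2.2⟩
      · rw [show c*b*a*d = a*b*c*d by ring] at h
        exact Or.inr (Or.inr (Or.inr (Or.inl h)))
    · rcases core c d a b pc pd pa pb ec ed ea eb (by omega) (by omega) (by omega) (by omega) (by omega) (by linear_combination heq) with h | h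
      · exact Or.inl ⟨h.2.2.1, h.2.2.2, h.1, h.2.1⟩
      · rw [show c*d*a*b = a*b*c*d by ring] at h
        exact Or.inr (Or.inr (Or.inr (Or.inl h)))
  · have C3 : (b ≤ a ∧ c ≤ a) ∨ (a ≤ b ∧ c ≤ b) ∨ (a ≤ c ∧ b ≤ c) := by omega
    rcases C3 with ⟨g1, g2⟩ | ⟨g1, g2⟩ | ⟨g1, g2⟩
    · rcases core d a b c pd pa pb pc ed ea eb ec (by omega) (by omega) (by omega) (by omega) (by omega) (by linear_combination heq) with h | h
      · exact Or.inl ⟨h.2.1, h.2.2.1, h.2.2.2, h.1⟩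
      · rw [show d*a*b*c = a*b*c*d by ring] at h
        exact Or.inr (Or.inr (Or.inr (Or.inr h)))
    · rcases core d b a c pd pb pa pc ed eb ea ec (by omega) (by omega) (by omega) (by omega) (by omega) (by linear_combination heq) with h | h
      · exact Or.inl ⟨h.2.2.1, h.2.1, h.2.2.2, h.1⟩
      · rw [show d*b*a*c = a*b*c*d by ring] at h
        exact Or.inr (Or.inr (Or.inr (Or.inr h)))
    · rcases core d c a b pd pc pa pb ed ec ea eb (by omega) (by omega) (by omega) (by omega) (by omega) (by linear_combination heq) with h | h
      · exact Or.inl ⟨h.2.2.1, h.2.2.2, h.2.1, h.1⟩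
      · rw [show d*c*a*b = a*b*c*d by ring] at h
        exact Or.inr (Or.inr (Or.inr (Or.inr h)))

lemma Lx (x : Fin 4 → ℤ) (hpos : ∀ i, 0 < x i) (heq : ∑ i, (x i) ^ 2 = ∏ i, x i) :
    (∀ i, x i = 2) ∨ ∃ j, (∏ i, x i) < 2 * (x j)^2 := by
  rw [Fin.sum_univ_four, Fin.prod_univ_four] at heq
  have hp : ∏ i, x i = x 0 * x 1 * x 2 * x 3 := Fin.prod_univ_four x
  rcases L' (x 0) (x 1) (x 2) (x 3) (hpos 0) (hpos 1) (hpos 2) (hpos 3) heq with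
    h | h | h | h | h
  · left; intro i; fin_cases i
    · exact h.1
    · exact h.2.1
    · exact h.2.2.1
    · exact h.2.2.2
  · exact Or.inr ⟨0, by rw [hp]; exact h⟩
  · exact Or.inr ⟨1, by rw [hp]; exact h⟩
  · exact Or.inr ⟨2, by rw [hp]; exact h⟩
  · exact Or.inr ⟨3, by rw [hp]; exact h⟩

lemma mm_apply_ne (j : Fin 4) (x : Fin 4 → ℤ) (i : Fin 4) (h : i ≠ j) :
    markoffMove j x i = x i := Function.update_of_ne h _ _

lemma mm_apply_self (j : Fin 4) (x : Fin 4 → ℤ) :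
    markoffMove j x j = (∏ i ∈ Finset.univ.erase j, x i) - x j := Function.update_self _ _ _

lemma mm_erase_prod (j : Fin 4) (x : Fin 4 → ℤ) :
    ∏ i ∈ Finset.univ.erase j, markoffMove j x i = ∏ i ∈ Finset.univ.erase j, x i :=
  Finset.prod_congr rfl fun i hi => mm_apply_ne j x i (Finset.ne_of_mem_erase hi)

lemma mm_erase_sumsq (j : Fin 4) (x : Fin 4 → ℤ) :
    ∑ i ∈ Finset.univ.erase j, (markoffMove j x i)^2 = ∑ i ∈ Finset.univ.erase j, (x i)^2 :=
  Finset.sum_congr rfl fun i hi => by rw [mm_apply_ne j x i (Finset.ne_of_mem_erase hi)]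

lemma mm_erase_sum (j : Fin 4) (x : Fin 4 → ℤ) :
    ∑ i ∈ Finset.univ.erase j, markoffMove j x i = ∑ i ∈ Finset.univ.erase j, x i :=
  Finset.sum_congr rfl fun i hi => mm_apply_ne j x i (Finset.ne_of_mem_erase hi)

lemma mm_invol (j : Fin 4) (x : Fin 4 → ℤ) : markoffMove j (markoffMove j x) = x := by
  funext i
  by_cases h : i = j
  · subst h
    rw [mm_apply_self, mm_erase_prod, mm_apply_self]
    ring
  · rw [mm_apply_ne _ _ _ h, mm_apply_ne _ _ _ h]

lemma key_decomp (j : Fin 4) (x : Fin 4 → ℤ) (heq : ∑ i, (x i) ^ 2 = ∏ i, x i) :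
    (x j)^2 + ∑ i ∈ Finset.univ.erase j, (x i)^2
      = x j * ∏ i ∈ Finset.univ.erase j, x i := by
  rw [Finset.add_sum_erase _ (fun i => x i ^ 2) (Finset.mem_univ j), heq,
    ← Finset.mul_prod_erase _ x (Finset.mem_univ j)]

lemma mm_preserve (j : Fin 4) (x : Fin 4 → ℤ) (heq : ∑ i, (x i) ^ 2 = ∏ i, x i) :
    ∑ i, (markoffMove j x i) ^ 2 = ∏ i, markoffMove j x i := by
  have hk := key_decomp j x heq
  rw [← Finset.add_sum_erase _ (fun i => (markoffMove j x i) ^ 2) (Finset.mem_univ j),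
    ← Finset.mul_prod_erase _ (markoffMove j x) (Finset.mem_univ j),
    mm_apply_self, mm_erase_prod, mm_erase_sumsq]
  linear_combination hk

lemma erase_sumsq_pos (j : Fin 4) (x : Fin 4 → ℤ) (hpos : ∀ i, 0 < x i) :
    0 < ∑ i ∈ Finset.univ.erase j, (x i)^2 := by
  apply Finset.sum_pos (fun i _ => pow_pos (hpos i) 2)
  apply Finset.card_pos.mp
  rw [Finset.card_erase_of_mem (Finset.mem_univ j), Finset.card_univ, Fintype.card_fin]
  norm_num

lemma mm_pos (j : Fin 4) (x : Fin 4 → ℤ) (hpos : ∀ i, 0 < x i)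
    (heq : ∑ i, (x i) ^ 2 = ∏ i, x i) : ∀ i, 0 < markoffMove j x i := by
  have hk := key_decomp j x heq
  have hS := erase_sumsq_pos j x hpos
  have hj := hpos j
  have hnew : 0 < (∏ i ∈ Finset.univ.erase j, x i) - x j := by nlinarith
  intro i
  by_cases h : i = j
  · subst h; rw [mm_apply_self]; exact hnew
  · rw [mm_apply_ne _ _ _ h]; exact hpos i

theorem stmt_12 (x : Fin 4 → ℤ) (hpos : ∀ i, 0 < x i)
    (heq : ∑ i, (x i) ^ 2 = ∏ i, x i) :
    ∃ l : List (Fin 4), x = l.foldl (fun y j => markoffMove j y) (fun _ => 2) := by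
  suffices H : ∀ n : ℕ, ∀ x : Fin 4 → ℤ, (∑ i, x i).toNat ≤ n → (∀ i, 0 < x i) →
      (∑ i, (x i) ^ 2 = ∏ i, x i) →
      ∃ l : List (Fin 4), x = l.foldl (fun y j => markoffMove j y) (fun _ => 2) by
    exact H _ x le_rfl hpos heq
  intro n
  induction n with
  | zero =>
    intro x hle hpos _
    exfalso
    have h0 : 0 < ∑ i, x i := Finset.sum_pos (fun i _ => hpos i) Finset.univ_nonempty
    omega
  | succ n ih =>
    intro x hle hpos heq
    rcases Lx x hpos heq with hall | ⟨j, hlt⟩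
    · exact ⟨[], funext fun i => hall i⟩
    · set y := markoffMove j x with hy
      have hyeq := mm_preserve j x heq
      have hypos := mm_pos j x hpos heq
      have hk := key_decomp j x heq
      have hP : x j * ∏ i ∈ Finset.univ.erase j, x i = ∏ i, x i :=
        Finset.mul_prod_erase _ _ (Finset.mem_univ j)
      have hj := hpos j
      have hdec : (∏ i ∈ Finset.univ.erase j, x i) - x j < x j := by nlinarith
      have hsum : ∑ i, y i < ∑ i, x i := by
        rw [hy, ← Finset.add_sum_erase _ (markoffMove j x) (Finset.mem_univ j),
          ← Finset.add_sum_erase _ x (Finset.mem_univ j), mm_apply_self, mm_erase_sum]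
        linarith
      have hy0 : 0 < ∑ i, y i := Finset.sum_pos (fun i _ => hypos i) Finset.univ_nonempty
      obtain ⟨l, hl⟩ := ih y (by omega) hypos hyeq
      refine ⟨l ++ [j], ?_⟩
      rw [List.foldl_append, ← hl]
      show x = markoffMove j y
      rw [hy, mm_invol]
end
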